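/- Let G be a connected graph of size m, let X be a Perron vector of G and u* an extremal vertex. If ρ(G) > (1+√(4m-5))/2, then e(W) < e(N(u*)) - |N(u*) \ N_0(u*)| + 3/2, where e(N(u*)) is the number of edges of G with both ends in N(u*) and e(W) the number of edges with both ends in W = V(G) \ N[u*]. -/

import Mathlib

open Matrix SimpleGraph
open scoped Classical

/-- The spectral radius of a finite simple graph: the largest (real) eigenvalue
of its adjacency matrix. -/
noncomputable def specRad {V : Type*} [Fintype V] (G : SimpleGraph V) : ℝ :=
  sSup {t : ℝ | ∃ x : V → ℝ, x ≠ 0 ∧ G.adjMatrix ℝ *ᵥ x = t • x}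

/-- `x` is a Perron vector of `G`: positive entries and an eigenvector for the
spectral radius. -/
def IsPerronVector {V : Type*} [Fintype V] (G : SimpleGraph V) (x : V → ℝ) : Prop :=
  (∀ v, 0 < x v) ∧ G.adjMatrix ℝ *ᵥ x = specRad G • x

/-- `G` contains a copy of `F` as a (not necessarily induced) subgraph. -/
def ContainsSub {α β : Type*} (F : SimpleGraph α) (G : SimpleGraph β) : Prop :=
  ∃ f : α ↪ β, ∀ ⦃a b⦄, F.Adj a b → G.Adj (f a) (f b)

/-- Number of edges of `G` with both endpoints in `S`. -/
noncomputable def eIn {V : Type*} (G : SimpleGraph V) (S : Set V) : ℕ :=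
  {e ∈ G.edgeSet | ∀ v ∈ e, v ∈ S}.ncard

/-- The cycle graph `C_n` on `Fin n`. -/
def cycG (n : ℕ) : SimpleGraph (Fin n) :=
  SimpleGraph.fromRel (fun a b => b.val = (a.val + 1) % n)

/-- The star `K_{1,r}` on `r+1` vertices, center `0`. -/
def starG (r : ℕ) : SimpleGraph (Fin (r + 1)) :=
  SimpleGraph.fromRel (fun a _ => a.val = 0)

/-- `S_n^k`: the star `K_{1,n-1}` (center `0`) together with `k` disjoint edges
`(1,2), (3,4), …, (2k-1,2k)` inside its independent set. -/
def Sgraph (n k : ℕ) : SimpleGraph (Fin n) :=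
  SimpleGraph.fromRel (fun a b =>
    a.val = 0 ∨ (a.val % 2 = 1 ∧ b.val = a.val + 1 ∧ b.val ≤ 2 * k))

/-- `C_5 • K_{1,m-5}`: the cycle `0-1-2-3-4-0` with `m-5` pendant vertices
attached to vertex `0`; it has `m` edges. -/
def C5DotStar (m : ℕ) : SimpleGraph (Fin m) :=
  SimpleGraph.fromRel (fun a b =>
    (a.val < 5 ∧ b.val < 5 ∧ b.val = (a.val + 1) % 5) ∨ (a.val = 0 ∧ 5 ≤ b.val))

/-- `S_{n,2}`: `K_2` (vertices 0,1) joined to `n-2` isolated vertices. -/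
def Snk2 (n : ℕ) : SimpleGraph (Fin n) :=
  SimpleGraph.fromRel (fun a _ => a.val < 2)

/-- `S_{n,2}^-`: `S_{n,2}` minus one edge (the edge `1-2`) incident to a vertex
of degree two. -/
def Snk2Minus (n : ℕ) : SimpleGraph (Fin n) :=
  SimpleGraph.fromRel (fun a b => a.val = 0 ∨ (a.val = 1 ∧ b.val ≠ 2))

/-- `C_t^+`: the cycle `C_t` on `0,…,t-1` and a triangle glued along the edge
`0-1`, via the extra vertex `t`. -/
def CtPlus (t : ℕ) : SimpleGraph (Fin (t + 1)) :=
  SimpleGraph.fromRel (fun a b =>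
    (a.val < t ∧ b.val < t ∧ b.val = (a.val + 1) % t) ∨ (a.val = t ∧ b.val ≤ 1))

/-- The double star `D_{a,b}`: adjacent centers `0, 1`; `0` has `a` further
leaves, `1` has `b` further leaves. -/
def doubleStar (a b : ℕ) : SimpleGraph (Fin (a + b + 2)) :=
  SimpleGraph.fromRel (fun x y =>
    (x.val = 0 ∧ (y.val = 1 ∨ (2 ≤ y.val ∧ y.val < a + 2))) ∨
    (x.val = 1 ∧ a + 2 ≤ y.val))

/-- The graph `G₁₄(t,r)`: `u = 0` adjacent to everything, `u₀ = 1` adjacent to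
`u_1,…,u_r` (vertices `2,…,r+1`), and `t` further vertices adjacent only to `0`. -/
def G14 (t r : ℕ) : SimpleGraph (Fin (t + r + 2)) :=
  SimpleGraph.fromRel (fun a b => a.val = 0 ∨ (a.val = 1 ∧ 2 ≤ b.val ∧ b.val ≤ r + 1))

/-- `S_m^e`: the star `K_{1,m-1}` (center 0, leaves `1,…,m-1`) with a pendant
vertex `m` attached to the leaf `1`. -/
def SmE (m : ℕ) : SimpleGraph (Fin (m + 1)) :=
  SimpleGraph.fromRel (fun a b =>
    (a.val = 0 ∧ 1 ≤ b.val ∧ b.val ≤ m - 1) ∨ (a.val = 1 ∧ b.val = m))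

/-- `K_{1,m-1} ∪ P_2`: the star with center 0 and leaves `1,…,m-1`, together
with the disjoint edge `m-(m+1)`. -/
def starUnionP2 (m : ℕ) : SimpleGraph (Fin (m + 2)) :=
  SimpleGraph.fromRel (fun a b =>
    (a.val = 0 ∧ 1 ≤ b.val ∧ b.val ≤ m - 1) ∨ (a.val = m ∧ b.val = m + 1))

/-- `N_0(u)`: neighbors of `u` having no neighbor inside `N(u)`. -/
def N0 {V : Type*} (G : SimpleGraph V) (u : V) : Set V :=
  {v | G.Adj u v ∧ ∀ w, G.Adj v w → ¬ G.Adj u w}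

/-- `N_+(u) = N(u) \ N_0(u)`. -/
def Nplus {V : Type*} (G : SimpleGraph V) (u : V) : Set V :=
  G.neighborSet u \ N0 G u

/-- `N_1(u)`: neighbors of `u` having exactly one neighbor inside `N(u)`. -/
noncomputable def N1set {V : Type*} (G : SimpleGraph V) (u : V) : Set V :=
  {v | G.Adj u v ∧ (G.neighborSet v ∩ G.neighborSet u).ncard = 1}

/-- `W = V(G) \ N[u]`. -/
def Wset {V : Type*} (G : SimpleGraph V) (u : V) : Set V :=
  {v | v ≠ u ∧ ¬ G.Adj u v}

section Helpers
open Finset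
variable {V : Type*} [Fintype V] (G : SimpleGraph V)

noncomputable def esub (S : Finset V) : Finset (Sym2 V) :=
  G.edgeFinset.filter (fun e => ∀ v ∈ e, v ∈ S)

lemma eIn_eq (S : Finset V) : eIn G ↑S = (esub G S).card := by
  rw [eIn, ← Set.ncard_coe_finset]
  congr 1
  ext e
  simp [esub, Set.mem_setOf_eq, mem_coe, mem_filter, mem_edgeFinset]

lemma inter_card_eq (v : V) (T : Finset V) :
    (G.neighborFinset v ∩ T).card = (T.filter (fun w => G.Adj v w)).card := by
  congr 1; ext w; simp [mem_inter, mem_filter, and_comm]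

lemma sum_inter_eq_pairs (S T : Finset V) :
    ∑ v ∈ S, (G.neighborFinset v ∩ T).card
      = ((S ×ˢ T).filter (fun p => G.Adj p.1 p.2)).card := by
  simp only [inter_card_eq, card_filter]
  rw [Finset.sum_product]

lemma sum_inter_symm (S T : Finset V) :
    ∑ v ∈ S, (G.neighborFinset v ∩ T).card = ∑ v ∈ T, (G.neighborFinset v ∩ S).card := by
  simp only [inter_card_eq, card_filter]
  rw [Finset.sum_comm]
  apply Finset.sum_congr rfl; intro w _
  apply Finset.sum_congr rfl; intro v _
  simp [G.adj_comm]

lemma sum_inter_self (S : Finset V) :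
    ∑ v ∈ S, (G.neighborFinset v ∩ S).card = 2 * eIn G ↑S := by
  rw [sum_inter_eq_pairs, eIn_eq]
  rw [Finset.card_eq_sum_card_fiberwise
    (f := fun p : V × V => Sym2.mk p.1 p.2) (t := esub G S) ?_]
  · rw [Finset.sum_congr rfl (fun e he => ?_), Finset.sum_const, smul_eq_mul, mul_comm]
    -- fiber has card 2
    induction e with
    | _ a b =>
      simp only [esub, mem_filter, mem_edgeFinset, mem_edgeSet] at he
      obtain ⟨hab, hmem⟩ := he
      have ha : a ∈ S := hmem a (by simp)
      have hb : b ∈ S := hmem b (by simp)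
      have hne : a ≠ b := hab.ne
      have : (filter (fun p => Sym2.mk p.1 p.2 = s(a,b)) (filter (fun p => G.Adj p.1 p.2) (S ×ˢ S)))
          = {(a,b), (b,a)} := by
        ext ⟨v, w⟩
        simp only [mem_filter, mem_product, Sym2.eq_iff, mem_insert, mem_singleton,
          Prod.mk.injEq]
        constructor
        · rintro ⟨⟨⟨hv, hw⟩, hadj⟩, h⟩
          tauto
        · rintro (⟨rfl, rfl⟩ | ⟨rfl, rfl⟩) <;>
            simp [ha, hb, hab, hab.symm]
      rw [this, Finset.card_insert_of_notMem (by simp [hne]), Finset.card_singleton]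
  · rintro ⟨v, w⟩ hp
    simp only [mem_coe, mem_filter, mem_product] at hp
    obtain ⟨⟨hv, hw⟩, hadj⟩ := hp
    simp only [mem_coe, esub, mem_filter, mem_edgeFinset, mem_edgeSet]
    refine ⟨hadj, ?_⟩
    intro z hz
    rcases Sym2.mem_iff.mp hz with rfl | rfl <;> assumption

section Partition
variable (u : V)

noncomputable def Wf : Finset V := Finset.univ.filter (fun v => v ≠ u ∧ ¬ G.Adj u v)

lemma mem_Wf {v : V} : v ∈ Wf G u ↔ v ≠ u ∧ ¬ G.Adj u v := by simp [Wf]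

lemma nbhd_split_Nu {v : V} (hv : v ∈ G.neighborFinset u) :
    G.neighborFinset v =
      insert u ((G.neighborFinset v ∩ G.neighborFinset u) ∪ (G.neighborFinset v ∩ Wf G u)) := by
  rw [mem_neighborFinset] at hv
  ext w
  simp only [mem_neighborFinset, mem_insert, mem_union, mem_inter, mem_Wf]
  constructor
  · intro hvw
    by_cases hwu : w = u
    · exact Or.inl hwu
    · by_cases h : G.Adj u w
      · exact Or.inr (Or.inl ⟨hvw, h⟩)
      · exact Or.inr (Or.inr ⟨hvw, hwu, h⟩)
  · rintro (rfl | ⟨h, _⟩ | ⟨h, _⟩)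
    · exact hv.symm
    · exact h
    · exact h

lemma nbhd_split_Wf {v : V} (hv : v ∈ Wf G u) :
    G.neighborFinset v =
      (G.neighborFinset v ∩ G.neighborFinset u) ∪ (G.neighborFinset v ∩ Wf G u) := by
  rw [mem_Wf] at hv
  ext w
  simp only [mem_neighborFinset, mem_union, mem_inter, mem_Wf]
  constructor
  · intro hvw
    by_cases h : G.Adj u w
    · exact Or.inl ⟨hvw, h⟩
    · refine Or.inr ⟨hvw, fun hwu => ?_, h⟩
      exact hv.2 (hwu ▸ hvw).symm
  · rintro (⟨h, _⟩ | ⟨h, _⟩) <;> exact h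

lemma disj_inter {v : V} :
    Disjoint (G.neighborFinset v ∩ G.neighborFinset u) (G.neighborFinset v ∩ Wf G u) := by
  rw [Finset.disjoint_left]
  intro w h1 h2
  simp only [mem_inter, mem_neighborFinset, mem_Wf] at h1 h2
  exact h2.2.2 h1.2

lemma u_notin_union {v : V} :
    u ∉ (G.neighborFinset v ∩ G.neighborFinset u) ∪ (G.neighborFinset v ∩ Wf G u) := by
  simp [mem_union, mem_inter, mem_neighborFinset, mem_Wf]

lemma univ_split : (Finset.univ : Finset V) = insert u (G.neighborFinset u ∪ Wf G u) := by
  ext v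
  simp only [mem_univ, true_iff, mem_insert, mem_union, mem_neighborFinset, mem_Wf]
  by_cases hvu : v = u
  · exact Or.inl hvu
  · by_cases h : G.Adj u v
    · exact Or.inr (Or.inl h)
    · exact Or.inr (Or.inr ⟨hvu, h⟩)

lemma u_notin_NuWf : u ∉ G.neighborFinset u ∪ Wf G u := by
  simp [mem_union, mem_neighborFinset, mem_Wf]

lemma Nu_disj_Wf : Disjoint (G.neighborFinset u) (Wf G u) := by
  rw [Finset.disjoint_left]
  intro w h1 h2
  rw [mem_neighborFinset] at h1
  exact (mem_Wf G u |>.mp h2).2 h1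

lemma edge_count :
    G.edgeFinset.card = (G.neighborFinset u).card + eIn G ↑(G.neighborFinset u)
      + (∑ v ∈ G.neighborFinset u, (G.neighborFinset v ∩ Wf G u).card)
      + eIn G ↑(Wf G u) := by
  have h2 := G.sum_degrees_eq_twice_card_edges
  simp only [SimpleGraph.degree] at h2
  rw [univ_split G u, Finset.sum_insert (u_notin_NuWf G u),
    Finset.sum_union (Nu_disj_Wf G u)] at h2
  have hNu : ∑ v ∈ G.neighborFinset u, (G.neighborFinset v).card
      = (G.neighborFinset u).card + (2 * eIn G ↑(G.neighborFinset u)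
        + ∑ v ∈ G.neighborFinset u, (G.neighborFinset v ∩ Wf G u).card) := by
    have step : ∀ v ∈ G.neighborFinset u, (G.neighborFinset v).card
        = 1 + ((G.neighborFinset v ∩ G.neighborFinset u).card
          + (G.neighborFinset v ∩ Wf G u).card) := by
      intro v hv
      conv_lhs => rw [nbhd_split_Nu G u hv]
      rw [Finset.card_insert_of_notMem (u_notin_union G u),
        Finset.card_union_of_disjoint (disj_inter G u)]
      ring
    rw [Finset.sum_congr rfl step, Finset.sum_add_distrib, Finset.sum_add_distrib,
      Finset.sum_const, smul_eq_mul, mul_one, sum_inter_self]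
  have hWf : ∑ v ∈ Wf G u, (G.neighborFinset v).card
      = (∑ v ∈ G.neighborFinset u, (G.neighborFinset v ∩ Wf G u).card)
        + 2 * eIn G ↑(Wf G u) := by
    have step : ∀ v ∈ Wf G u, (G.neighborFinset v).card
        = (G.neighborFinset v ∩ G.neighborFinset u).card
          + (G.neighborFinset v ∩ Wf G u).card := by
      intro v hv
      conv_lhs => rw [nbhd_split_Wf G u hv]
      rw [Finset.card_union_of_disjoint (disj_inter G u)]
    rw [Finset.sum_congr rfl step, Finset.sum_add_distrib, ← sum_inter_symm,
      sum_inter_self]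
  rw [hNu, hWf] at h2
  omega
end Partition

end Helpers


open Finset in
/-- For a connected graph `G` of size `m` with Perron vector `x`, extremal vertex `u`
and `ρ(G) > (1+√(4m-5))/2`: `e(W) < e(N(u)) - |N(u) \ N_0(u)| + 3/2`. -/
theorem stmt19 {V : Type*} [Fintype V] (G : SimpleGraph V) (m : ℕ)
    (hconn : G.Connected) (hsize : G.edgeSet.ncard = m)
    (x : V → ℝ) (hx : IsPerronVector G x) (u : V) (hu : ∀ v, x v ≤ x u)
    (hρ : (1 + Real.sqrt (4 * (m : ℝ) - 5)) / 2 < specRad G) :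
    (eIn G (Wset G u) : ℝ) <
      (eIn G (G.neighborSet u) : ℝ) - ((Nplus G u).ncard : ℝ) + 3 / 2 := by
  obtain ⟨hxpos, heig⟩ := hx
  set ρ := specRad G with hρdef
  have eig : ∀ v : V, ∑ w ∈ G.neighborFinset v, x w = ρ * x v := by
    intro v
    have h := congrFun heig v
    rw [adjMatrix_mulVec_apply] at h
    simpa using h
  set Nu := G.neighborFinset u with hNudef
  set Wfu := Wf G u with hWfdef
  have hxu : 0 < x u := hxpos u
  have hm : G.edgeFinset.card = m := by
    rw [← hsize, ← Set.ncard_coe_finset, coe_edgeFinset]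
  set Npf := Nu.filter (fun w => (G.neighborFinset w ∩ Nu).Nonempty) with hNpfdef
  have hNplus : (Nplus G u).ncard = Npf.card := by
    rw [← Set.ncard_coe_finset]
    congr 1
    ext v
    simp only [Nplus, N0, Set.mem_diff, mem_neighborSet, Set.mem_setOf_eq, mem_coe,
      hNpfdef, mem_filter, hNudef, mem_neighborFinset, Finset.Nonempty, mem_inter]
    constructor
    · rintro ⟨hadj, hn⟩
      refine ⟨hadj, ?_⟩
      push_neg at hn
      obtain ⟨w, hw1, hw2⟩ := hn hadj
      exact ⟨w, hw1, hw2⟩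
    · rintro ⟨hadj, w, hw1, hw2⟩
      exact ⟨hadj, fun h => h.2 w hw1 hw2⟩
  have hWset : Wset G u = ↑Wfu := by
    ext v; simp [Wset, hWfdef, mem_Wf]
  have hNset : G.neighborSet u = ↑Nu := by
    rw [hNudef, neighborFinset_def, Set.coe_toFinset]
  rw [hWset, hNset, hNplus]
  have key1 : ρ * x u = ∑ v ∈ Nu, x v := (eig u).symm
  have split : ∀ v ∈ Nu, ∑ w ∈ G.neighborFinset v, x w
      = x u + (∑ w ∈ G.neighborFinset v ∩ Nu, x w + ∑ w ∈ G.neighborFinset v ∩ Wfu, x w) := by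
    intro v hv
    conv_lhs => rw [nbhd_split_Nu G u hv]
    rw [Finset.sum_insert (u_notin_union G u), Finset.sum_union (disj_inter G u)]
  have key2 : ρ * (ρ * x u) = (Nu.card : ℝ) * x u
      + (∑ v ∈ Nu, ∑ w ∈ G.neighborFinset v ∩ Nu, x w)
      + (∑ v ∈ Nu, ∑ w ∈ G.neighborFinset v ∩ Wfu, x w) := by
    rw [key1, Finset.mul_sum]
    rw [Finset.sum_congr rfl (fun v hv => ((eig v).symm.trans (split v hv)))]
    rw [Finset.sum_add_distrib, Finset.sum_const, Finset.sum_add_distrib]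
    push_cast
    ring
  have swap1 : ∑ v ∈ Nu, ∑ w ∈ G.neighborFinset v ∩ Nu, x w
      = ∑ w ∈ Nu, ((G.neighborFinset w ∩ Nu).card : ℝ) * x w := by
    have e1 : ∀ v ∈ Nu, ∑ w ∈ G.neighborFinset v ∩ Nu, x w
        = ∑ w ∈ Nu, if G.Adj v w then x w else 0 := by
      intro v _
      rw [show G.neighborFinset v ∩ Nu = Nu.filter (fun w => G.Adj v w) from by
        ext w; simp [mem_inter, mem_filter, and_comm], Finset.sum_filter]
    rw [Finset.sum_congr rfl e1, Finset.sum_comm]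
    apply Finset.sum_congr rfl
    intro w hw
    have e2 : ∀ v ∈ Nu, (if G.Adj v w then x w else 0) = if G.Adj w v then x w else 0 := by
      intro v _; simp [G.adj_comm]
    rw [Finset.sum_congr rfl e2, ← Finset.sum_filter, Finset.sum_const, inter_card_eq]
    simp [nsmul_eq_mul]
  have hsum_c : ∑ w ∈ Nu, ((G.neighborFinset w ∩ Nu).card : ℝ) = 2 * (eIn G ↑Nu : ℝ) := by
    rw [← Nat.cast_sum, sum_inter_self]
    push_cast; ring
  have bound1 : ∑ w ∈ Nu, ((G.neighborFinset w ∩ Nu).card : ℝ) * x w - ∑ v ∈ Nu, x v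
      ≤ (2 * (eIn G ↑Nu : ℝ) - Npf.card) * x u := by
    rw [← Finset.sum_sub_distrib]
    have hsplit := Finset.sum_filter_add_sum_filter_not Nu
      (fun w => (G.neighborFinset w ∩ Nu).Nonempty)
      (fun w => ((G.neighborFinset w ∩ Nu).card : ℝ) * x w - x w)
    rw [← hsplit]
    have h2 : ∑ w ∈ Nu.filter (fun w => ¬ (G.neighborFinset w ∩ Nu).Nonempty),
        (((G.neighborFinset w ∩ Nu).card : ℝ) * x w - x w) ≤ 0 := by
      apply Finset.sum_nonpos
      intro w hw
      rw [mem_filter] at hw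
      rw [Finset.not_nonempty_iff_eq_empty] at hw
      rw [hw.2]
      simp only [Finset.card_empty, Nat.cast_zero, zero_mul, zero_sub, neg_nonpos]
      exact (hxpos w).le
    have h1 : ∑ w ∈ Npf, (((G.neighborFinset w ∩ Nu).card : ℝ) * x w - x w)
        ≤ ∑ w ∈ Npf, (((G.neighborFinset w ∩ Nu).card : ℝ) - 1) * x u := by
      apply Finset.sum_le_sum
      intro w hw
      rw [hNpfdef, mem_filter] at hw
      have hc1 : (1 : ℝ) ≤ ((G.neighborFinset w ∩ Nu).card : ℝ) := by
        exact_mod_cast Finset.card_pos.mpr hw.2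
      have hxw := hu w
      nlinarith [hxpos w]
    have h3 : ∑ w ∈ Npf, (((G.neighborFinset w ∩ Nu).card : ℝ) - 1) * x u
        = (2 * (eIn G ↑Nu : ℝ) - Npf.card) * x u := by
      rw [← Finset.sum_mul]
      congr 1
      rw [Finset.sum_sub_distrib, Finset.sum_const, ← hsum_c]
      have e : ∑ w ∈ Npf, ((G.neighborFinset w ∩ Nu).card : ℝ)
          = ∑ w ∈ Nu, ((G.neighborFinset w ∩ Nu).card : ℝ) := by
        rw [hNpfdef]
        apply Finset.sum_filter_of_ne
        intro w _ h
        have hne : (G.neighborFinset w ∩ Nu).card ≠ 0 := by exact_mod_cast h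
        exact Finset.card_pos.mp (Nat.pos_of_ne_zero hne)
      rw [e]
      simp
    calc ∑ w ∈ Npf, (((G.neighborFinset w ∩ Nu).card : ℝ) * x w - x w)
          + ∑ w ∈ Nu.filter (fun w => ¬ (G.neighborFinset w ∩ Nu).Nonempty),
            (((G.neighborFinset w ∩ Nu).card : ℝ) * x w - x w)
        ≤ ∑ w ∈ Npf, (((G.neighborFinset w ∩ Nu).card : ℝ) * x w - x w) := by linarith
      _ ≤ _ := h3 ▸ h1
  have bound2 : ∑ v ∈ Nu, ∑ w ∈ G.neighborFinset v ∩ Wfu, x w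
      ≤ (∑ v ∈ Nu, ((G.neighborFinset v ∩ Wfu).card : ℝ)) * x u := by
    rw [Finset.sum_mul]
    apply Finset.sum_le_sum
    intro v _
    calc ∑ w ∈ G.neighborFinset v ∩ Wfu, x w
        ≤ ∑ w ∈ G.neighborFinset v ∩ Wfu, x u := Finset.sum_le_sum (fun w _ => hu w)
      _ = _ := by rw [Finset.sum_const]; simp [nsmul_eq_mul]
  have hcount := edge_count G u
  rw [hm] at hcount
  have hcross0 : (Nu.card : ℝ) + (eIn G ↑Nu : ℝ)
      + (∑ v ∈ Nu, ((G.neighborFinset v ∩ Wfu).card : ℝ)) + (eIn G ↑Wfu : ℝ) = (m : ℝ) := by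
    rw [← Nat.cast_sum]
    rw [hcount, Nat.cast_add, Nat.cast_add, Nat.cast_add]
  have main : ρ * ρ - ρ ≤ (m : ℝ) + (eIn G ↑Nu : ℝ) - (eIn G ↑Wfu : ℝ) - Npf.card := by
    have hineq : ρ * (ρ * x u) - ρ * x u
        ≤ ((m : ℝ) + (eIn G ↑Nu : ℝ) - (eIn G ↑Wfu : ℝ) - Npf.card) * x u := by
      rw [key2, key1, swap1]
      have hco : (m : ℝ) + (eIn G ↑Nu : ℝ) - (eIn G ↑Wfu : ℝ) - Npf.card
          = (Nu.card : ℝ) + (2 * (eIn G ↑Nu : ℝ) - Npf.card)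
            + (∑ v ∈ Nu, ((G.neighborFinset v ∩ Wfu).card : ℝ)) := by
        linarith
      rw [hco, add_mul, add_mul]
      linarith
    have e : (ρ * ρ - ρ) * x u = ρ * (ρ * x u) - ρ * x u := by ring
    have h2 : (ρ * ρ - ρ) * x u
        ≤ ((m : ℝ) + (eIn G ↑Nu : ℝ) - (eIn G ↑Wfu : ℝ) - Npf.card) * x u := by
      rw [e]; exact hineq
    exact le_of_mul_le_mul_right h2 hxu
  have hsq : (m : ℝ) - 3/2 < ρ * ρ - ρ := by
    rcases le_or_gt 0 (4 * (m : ℝ) - 5) with hc | hc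
    · have h1 := Real.sq_sqrt hc
      have h2 := Real.sqrt_nonneg (4 * (m : ℝ) - 5)
      nlinarith
    · have h0 : Real.sqrt (4 * (m : ℝ) - 5) = 0 := Real.sqrt_eq_zero_of_nonpos hc.le
      rw [h0] at hρ
      have hm2 : (m : ℝ) < 5/4 := by linarith
      have hm3 : m < 2 := by exact_mod_cast hm2.trans (by norm_num : (5:ℝ)/4 < 2)
      have hm1 : (m : ℝ) ≤ 1 := by exact_mod_cast Nat.lt_succ_iff.mp hm3
      nlinarith
  linarith [main, hsq]
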